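/- arXiv:1301.3227 — 5 statements merged into one kernel-verified Lean document; each statement's English description precedes it below -/
import Mathlib

section
/- If H is a predictable process and S is a martingale under P with respect to a filtration (F_t)_{t=0,...,T}, and the negative part of the discrete stochastic integral (H·S)_T = Σ_{u=1}^T H_u (S_u - S_{u-1}) is P-integrable, then E_P[((H·S)_T)^+] = E_P[((H·S)_T)^-]. -/
/-!
Write `X_{T+1} = X_T + h D` with `h = H_{T+1}` `ℱ_T`-measurable and `D = ΔS_{T+1}`,
`E[D | ℱ_T] = 0`, and show by induction on `T` that `X_T⁻ ∈ L¹` forces `X_T ∈ L¹` and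
`E[X_T] = 0`. The increment `h D` integrates to zero over every `ℱ_T`-set on which `h` is
bounded. Integrating over such sets inside `{X_T ≤ 0}` bounds `E[X_T⁻]` by `E[X_{T+1}⁻]`,
so the induction hypothesis applies to `X_T`. Then `(h D)⁻ ≤ X_{T+1}⁻ + |X_T|` is integrable,
and exhausting `Ω` by the sets `{|h| ≤ n}` shows that `(h D)⁺` is integrable with the same
integral as `(h D)⁻`.
-/

open MeasureTheory Filter Finset

namespace MeasureTheory

variable {Ω : Type*} {m mΩ : MeasurableSpace Ω} {P : Measure Ω}

lemma integral_eq_integral_max_zero_sub {f : Ω → ℝ} (hf : Integrable f P) :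
    ∫ ω, f ω ∂P = ∫ ω, max (f ω) 0 ∂P - ∫ ω, max (-f ω) 0 ∂P := by
  simpa only [Real.coe_toNNReal'] using integral_eq_integral_pos_part_sub_integral_neg_part hf

lemma aecover_abs_le {g : Ω → ℝ} (hg : Measurable g) :
    AECover P atTop fun n : ℕ => {ω | |g ω| ≤ n} where
  ae_eventually_mem := ae_of_all _ fun ω =>
    (eventually_ge_atTop ⌈|g ω|⌉₊).mono fun _ hn => (Nat.le_ceil _).trans (Nat.cast_le.2 hn)
  measurableSet _ := measurableSet_le hg.abs measurable_const

lemma AECover.integrable_of_setIntegral_eq_zero {A : ℕ → Set Ω} (hA : AECover P atTop A)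
    {f : Ω → ℝ} (hneg : Integrable (fun ω => max (-f ω) 0) P)
    (hfA : ∀ n, IntegrableOn f (A n) P) (hfA0 : ∀ n, ∫ ω in A n, f ω ∂P = 0) :
    Integrable f P := by
  have hpos : Integrable (fun ω => max (f ω) 0) P := by
    refine hA.integrable_of_integral_bounded_of_nonneg_ae (∫ ω, max (-f ω) 0 ∂P)
      (fun n => (hfA n).pos_part) (ae_of_all _ fun _ => le_max_right _ _)
      (Eventually.of_forall fun n => ?_)
    have hsplit := integral_eq_integral_max_zero_sub (hfA n)
    calc ∫ ω in A n, max (f ω) 0 ∂P = ∫ ω in A n, max (-f ω) 0 ∂P := by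
          linarith [hfA0 n]
      _ ≤ ∫ ω, max (-f ω) 0 ∂P :=
        setIntegral_le_integral hneg (ae_of_all _ fun _ => le_max_right _ _)
  exact (hpos.sub hneg).congr (ae_of_all _ fun ω => max_zero_sub_max_neg_zero_eq_self (f ω))

lemma integrable_negPart_of_integrable_negPart_add {f g : Ω → ℝ}
    (hfg : Integrable (fun ω => max (-(f ω + g ω)) 0) P) (hf : Integrable f P)
    (hg : AEStronglyMeasurable g P) : Integrable (fun ω => max (-g ω) 0) P := by
  refine (hfg.add hf.abs).mono' (hg.neg.sup aestronglyMeasurable_const) (ae_of_all _ fun ω => ?_)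
  rw [Pi.add_apply, Real.norm_of_nonneg (le_max_right _ _)]
  exact max_le (by linarith [le_max_left (-(f ω + g ω)) 0, le_abs_self (f ω)]) (by positivity)

section MartingaleDifference

variable [IsFiniteMeasure P] {h D : Ω → ℝ}

lemma integrableOn_mul_and_setIntegral_eq_zero (hm : m ≤ mΩ) (hh : StronglyMeasurable[m] h)
    (hD : Integrable D P) (hD0 : P[D|m] =ᵐ[P] 0) {B : Set Ω} (hB : MeasurableSet[m] B) {C : ℝ}
    (hC : ∀ ω ∈ B, |h ω| ≤ C) :
    IntegrableOn (fun ω => h ω * D ω) B P ∧ ∫ ω in B, h ω * D ω ∂P = 0 := by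
  have hg : StronglyMeasurable[m] (B.indicator h) := hh.indicator hB
  have hgD : Integrable (B.indicator h * D) P := by
    refine hD.bdd_mul (c := |C|) (hg.mono hm).aestronglyMeasurable (ae_of_all _ fun ω => ?_)
    by_cases hω : ω ∈ B
    · simpa [hω] using (hC ω hω).trans (le_abs_self C)
    · simp [hω]
  have hcond : P[B.indicator h * D | m] =ᵐ[P] 0 := by
    filter_upwards [condExp_mul_of_stronglyMeasurable_left hg hgD hD, hD0] with ω h1 h2
    simp [h1, h2]
  have hindicator : B.indicator (fun ω => h ω * D ω) = B.indicator h * D := by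
    ext ω
    exact Set.indicator_mul_left B h D
  refine ⟨(integrable_indicator_iff (hm B hB)).1 (hindicator ▸ hgD), ?_⟩
  calc ∫ ω in B, h ω * D ω ∂P = ∫ ω, (B.indicator h * D) ω ∂P := by
        rw [← integral_indicator (hm B hB), hindicator]
    _ = ∫ ω, P[B.indicator h * D | m] ω ∂P := (integral_condExp hm).symm
    _ = 0 := by simp [integral_congr_ae hcond]

lemma integrable_mul_and_integral_eq_zero (hm : m ≤ mΩ) (hh : StronglyMeasurable[m] h)
    (hD : Integrable D P) (hD0 : P[D|m] =ᵐ[P] 0)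
    (hneg : Integrable (fun ω => max (-(h ω * D ω)) 0) P) :
    Integrable (fun ω => h ω * D ω) P ∧ ∫ ω, h ω * D ω ∂P = 0 := by
  have hA := aecover_abs_le (P := P) (hh.mono hm).measurable
  have hsets n := integrableOn_mul_and_setIntegral_eq_zero hm hh hD hD0
    (measurable_abs.comp hh.measurable measurableSet_Iic) (C := n) fun _ hω => hω
  have hint := hA.integrable_of_setIntegral_eq_zero hneg (fun n => (hsets n).1)
    fun n => (hsets n).2
  exact ⟨hint, hA.integral_eq_of_tendsto 0 hint
    (tendsto_const_nhds.congr fun n => (hsets n).2.symm)⟩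

lemma integrable_negPart_of_integrable_negPart_add_mul (hm : m ≤ mΩ)
    (hh : StronglyMeasurable[m] h) (hD : Integrable D P) (hD0 : P[D|m] =ᵐ[P] 0) {Y : Ω → ℝ}
    (hY : StronglyMeasurable[m] Y)
    (hneg : Integrable (fun ω => max (-(Y ω + h ω * D ω)) 0) P) :
    Integrable (fun ω => max (-Y ω) 0) P := by
  set A : ℕ → Set Ω := fun n => {ω | |h ω| ≤ n} ∩ {ω | |Y ω| ≤ n}
  have hAm n : MeasurableSet[m] (A n) :=
    (measurable_abs.comp hh.measurable measurableSet_Iic).inter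
      (measurable_abs.comp hY.measurable measurableSet_Iic)
  have hA : AECover P atTop A :=
    (aecover_abs_le (hh.mono hm).measurable).inter (aecover_abs_le (hY.mono hm).measurable)
  have hYA n : IntegrableOn Y (A n) P :=
    Measure.integrableOn_of_bounded (measure_ne_top P _) (hY.mono hm).aestronglyMeasurable
      (M := n) (ae_restrict_of_forall_mem (hm _ (hAm n)) fun _ hω => hω.2)
  refine hA.integrable_of_integral_bounded_of_nonneg_ae (∫ ω, max (-(Y ω + h ω * D ω)) 0 ∂P)
    (fun n => (hYA n).neg_part)
    (ae_of_all _ fun _ => le_max_right _ _) (Eventually.of_forall fun n => ?_)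
  -- `h D` integrates to zero over `A n ∩ {Y ≤ 0}`, where `Y⁻ = -Y`
  have hYm : MeasurableSet[m] {ω | Y ω ≤ 0} := hY.measurable measurableSet_Iic
  have hBm : MeasurableSet[m] (A n ∩ {ω | Y ω ≤ 0}) := (hAm n).inter hYm
  obtain ⟨hZB, hZB0⟩ := integrableOn_mul_and_setIntegral_eq_zero hm hh hD hD0 hBm (C := n)
    fun _ hω => hω.1.1
  have hYB : IntegrableOn Y (A n ∩ {ω | Y ω ≤ 0}) P := (hYA n).mono_set Set.inter_subset_left
  calc ∫ ω in A n, max (-Y ω) 0 ∂P = ∫ ω in A n ∩ {ω | Y ω ≤ 0}, -Y ω ∂P := by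
        rw [← setIntegral_indicator (hm _ hYm)]
        congr 1 with ω
        by_cases hω : Y ω ≤ 0 <;> simp [hω, le_of_lt, not_le.1]
    _ = ∫ ω in A n ∩ {ω | Y ω ≤ 0}, -(Y ω + h ω * D ω) ∂P := by
        rw [integral_neg, integral_neg, integral_add hYB hZB, hZB0, add_zero]
    _ ≤ ∫ ω in A n ∩ {ω | Y ω ≤ 0}, max (-(Y ω + h ω * D ω)) 0 ∂P :=
        integral_mono (hYB.add hZB).neg hneg.integrableOn fun _ => le_max_left _ _
    _ ≤ ∫ ω, max (-(Y ω + h ω * D ω)) 0 ∂P :=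
        setIntegral_le_integral hneg (ae_of_all _ fun _ => le_max_right _ _)

end MartingaleDifference

end MeasureTheory

namespace MeasureTheory.Martingale

variable {Ω : Type*} {mΩ : MeasurableSpace Ω} {P : Measure Ω} {ℱ : Filtration ℕ mΩ}
  {S : ℕ → Ω → ℝ}

lemma condExp_sub_ae_eq_zero (hS : Martingale S ℱ P) {i j : ℕ} (hij : i ≤ j) :
    P[S j - S i | ℱ i] =ᵐ[P] 0 := by
  filter_upwards [condExp_sub (hS.integrable j) (hS.integrable i) (ℱ i), hS.condExp_ae_eq hij,
    hS.condExp_ae_eq (le_refl i)] with ω h1 h2 h3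
  simp [h1, h2, h3]

end MeasureTheory.Martingale

section DiscreteIntegral

variable {Ω : Type*} {mΩ : MeasurableSpace Ω} {P : Measure Ω} {ℱ : Filtration ℕ mΩ}
  {H S : ℕ → Ω → ℝ}

def discreteIntegral (H S : ℕ → Ω → ℝ) (T : ℕ) (ω : Ω) : ℝ :=
  ∑ u ∈ Icc 1 T, H u ω * (S u ω - S (u - 1) ω)

lemma discreteIntegral_succ (T : ℕ) (ω : Ω) :
    discreteIntegral H S (T + 1) ω
      = discreteIntegral H S T ω + H (T + 1) ω * (S (T + 1) ω - S T ω) := by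
  simp [discreteIntegral, sum_Icc_succ_top]

lemma stronglyMeasurable_discreteIntegral (hS : StronglyAdapted ℱ S)
    (hH : ∀ t : ℕ, 1 ≤ t → StronglyMeasurable[ℱ (t - 1)] (H t)) (T : ℕ) :
    StronglyMeasurable[ℱ T] (discreteIntegral H S T) := by
  refine Finset.stronglyMeasurable_fun_sum _ fun u hu => ?_
  obtain ⟨hu1, huT⟩ := Finset.mem_Icc.1 hu
  exact ((hH u hu1).mono (ℱ.mono (by omega))).mul
    (((hS u).mono (ℱ.mono huT)).sub ((hS (u - 1)).mono (ℱ.mono (by omega))))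

theorem integrable_discreteIntegral_and_integral_eq_zero [IsFiniteMeasure P]
    (hS : Martingale S ℱ P)
    (hH : ∀ t : ℕ, 1 ≤ t → StronglyMeasurable[ℱ (t - 1)] (H t)) (T : ℕ)
    (hneg : Integrable (fun ω => max (-discreteIntegral H S T ω) 0) P) :
    Integrable (fun ω => discreteIntegral H S T ω) P ∧
      ∫ ω, discreteIntegral H S T ω ∂P = 0 := by
  induction T with
  | zero => simp [discreteIntegral]
  | succ T ih =>
    simp_rw [discreteIntegral_succ] at hneg ⊢
    have hh : StronglyMeasurable[ℱ T] (H (T + 1)) := by simpa using hH (T + 1) le_add_self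
    have hD : Integrable (fun ω => S (T + 1) ω - S T ω) P :=
      (hS.integrable (T + 1)).sub (hS.integrable T)
    have hD0 : P[fun ω => S (T + 1) ω - S T ω | ℱ T] =ᵐ[P] 0 :=
      hS.condExp_sub_ae_eq_zero T.le_succ
    obtain ⟨hYi, hY0⟩ := ih <| integrable_negPart_of_integrable_negPart_add_mul (ℱ.le T) hh hD
      hD0 (stronglyMeasurable_discreteIntegral hS.stronglyAdapted hH T) hneg
    obtain ⟨hZi, hZ0⟩ := integrable_mul_and_integral_eq_zero (ℱ.le T) hh hD hD0
      (integrable_negPart_of_integrable_negPart_add hneg hYi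
        ((hh.mono (ℱ.le T)).aestronglyMeasurable.mul hD.1))
    exact ⟨hYi.add hZi, by rw [integral_add hYi hZi, hY0, hZ0, add_zero]⟩

end DiscreteIntegral

/-- If `H` is predictable and `S` is a `P`-martingale, and the negative part of the
discrete stochastic integral `(H·S)_T` is `P`-integrable, then
`E_P[((H·S)_T)⁺] = E_P[((H·S)_T)⁻]`. -/
theorem stmt0 {Ω : Type*} {mΩ : MeasurableSpace Ω} (P : Measure Ω)
    [IsProbabilityMeasure P] (ℱ : Filtration ℕ mΩ) (T : ℕ)
    (S H : ℕ → Ω → ℝ)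
    (hS : Martingale S ℱ P)
    (hH : ∀ t : ℕ, 1 ≤ t → StronglyMeasurable[ℱ (t - 1)] (H t))
    (hneg : Integrable (fun ω => max (-(∑ u ∈ Finset.Icc 1 T, H u ω * (S u ω - S (u - 1) ω))) 0) P) :
    ∫ ω, max (∑ u ∈ Finset.Icc 1 T, H u ω * (S u ω - S (u - 1) ω)) 0 ∂P
      = ∫ ω, max (-(∑ u ∈ Finset.Icc 1 T, H u ω * (S u ω - S (u - 1) ω))) 0 ∂P := by
  obtain ⟨hint, hzero⟩ := integrable_discreteIntegral_and_integral_eq_zero hS hH T hneg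
  have := integral_eq_integral_max_zero_sub hint
  unfold discreteIntegral at this hzero
  linarith
end

section
/- Let 𝒫 be a nonempty set of probability measures on (Ω,F) under which the adapted process S is a martingale. Suppose {W^n = (H^n·S)_T − K^n} is a sequence with H^n predictable, K^n ≥ 0 𝒫-q.s., each W^n is P-integrable for all P ∈ 𝒫, and sup_n E_P[|W^n|] < ∞ for every P ∈ 𝒫. Then for every P ∈ 𝒫 and every t ∈ {1,...,T}, sup_n E_P[|H^n_t ΔS_t|] < ∞. -/
/-!
The partial sums `M s = (H·S)_s` form a discrete local martingale, and `M T = W + K ≥ W`, so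
`E[(M T)⁻] ≤ sup_n E|W^n|`. If `G, Y` are `ℱ s`-measurable and `D` is a martingale increment,
then `G⁻ ≤ E[(G + Y D)⁻ | ℱ s]`; backwards in time this gives `E[(M s)⁻] ≤ E[(M T)⁻]`.
Forwards in time, a finite negative part at `s + 1` upgrades integrability with mean zero from
`M s` to `M (s + 1)`. Hence `E|M s| = 2 E[(M s)⁻] ≤ 2 E[(M T)⁻]`, and the increment
`H_t ΔS_t = M t - M (t - 1)` is bounded by `4 E[(M T)⁻]` in `L¹`.
-/

open MeasureTheory Filter Finset

section Truncation

variable {Ω : Type*} {m mΩ : MeasurableSpace Ω} {P : Measure Ω}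
  {G Y D : Ω → ℝ}

/-- `G` and `Y` need not be integrable; on these sets both are bounded, so the pull-out property
of the conditional expectation applies to `Y * D` there. -/
def truncationSet (G Y : Ω → ℝ) (k : ℕ) : Set Ω := {ω | |G ω| ≤ k ∧ |Y ω| ≤ k}

lemma measurableSet_truncationSet (hG : StronglyMeasurable[m] G) (hY : StronglyMeasurable[m] Y)
    (k : ℕ) : MeasurableSet[m] (truncationSet G Y k) :=
  (measurableSet_le hG.measurable.abs measurable_const).inter
    (measurableSet_le hY.measurable.abs measurable_const)

lemma aecover_truncationSet (hm : m ≤ mΩ) (hG : StronglyMeasurable[m] G)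
    (hY : StronglyMeasurable[m] Y) : AECover P atTop (truncationSet G Y) where
  ae_eventually_mem := ae_of_all _ fun ω => by
    obtain ⟨k₀, hk₀⟩ := exists_nat_ge (max |G ω| |Y ω|)
    filter_upwards [eventually_ge_atTop k₀] with k hk
    have : max |G ω| |Y ω| ≤ k := hk₀.trans (Nat.cast_le.mpr hk)
    exact ⟨(le_max_left _ _).trans this, (le_max_right _ _).trans this⟩
  measurableSet k := hm _ (measurableSet_truncationSet hG hY k)

lemma indicator_truncationSet_add_mul (k : ℕ) :
    (truncationSet G Y k).indicator (G + Y * D)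
      = (truncationSet G Y k).indicator G + (truncationSet G Y k).indicator Y * D := by
  ext ω
  by_cases hω : ω ∈ truncationSet G Y k <;> simp [hω]

lemma integrable_indicator_truncationSet_add_mul [IsFiniteMeasure P] (hm : m ≤ mΩ)
    (hG : StronglyMeasurable[m] G) (hY : StronglyMeasurable[m] Y) (hD : Integrable D P)
    (hDc : P[D|m] =ᵐ[P] 0) (k : ℕ) :
    Integrable ((truncationSet G Y k).indicator (G + Y * D)) P ∧
      P[(truncationSet G Y k).indicator (G + Y * D)|m] =ᵐ[P] (truncationSet G Y k).indicator G := by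
  set A := truncationSet G Y k
  have hA := measurableSet_truncationSet hG hY k
  have hGA : StronglyMeasurable[m] (A.indicator G) := hG.indicator hA
  have hYA : StronglyMeasurable[m] (A.indicator Y) := hY.indicator hA
  have hGA_int : Integrable (A.indicator G) P :=
    .of_bound (hGA.mono hm).aestronglyMeasurable k <| ae_of_all _ fun ω => by
      by_cases hω : ω ∈ A
      · simpa [hω] using hω.1
      · simp [hω]
  have hYAD_int : Integrable (A.indicator Y * D) P :=
    hD.bdd_mul (c := k) (hYA.mono hm).aestronglyMeasurable <| ae_of_all _ fun ω => by
      by_cases hω : ω ∈ A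
      · simpa [hω] using hω.2
      · simp [hω]
  rw [indicator_truncationSet_add_mul]
  refine ⟨hGA_int.add hYAD_int, ?_⟩
  filter_upwards [condExp_add hGA_int hYAD_int m,
    condExp_mul_of_stronglyMeasurable_left hYA hYAD_int hD, hDc] with ω hsum hprod hDω
  rw [hsum, Pi.add_apply, condExp_of_stronglyMeasurable hm hGA hGA_int, hprod, Pi.mul_apply, hDω]
  simp

lemma negPart_le_condExp_negPart_add_mul [IsFiniteMeasure P] (hm : m ≤ mΩ)
    (hG : StronglyMeasurable[m] G) (hY : StronglyMeasurable[m] Y) (hD : Integrable D P)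
    (hDc : P[D|m] =ᵐ[P] 0) (hF : Integrable (G + Y * D)⁻ P) :
    G⁻ ≤ᵐ[P] P[(G + Y * D)⁻|m] := by
  have hA := aecover_truncationSet (P := P) hm hG hY
  have hbound : ∀ k, ∀ᵐ ω ∂P, ω ∈ truncationSet G Y k → -G ω ≤ P[(G + Y * D)⁻|m] ω := by
    intro k
    set A := truncationSet G Y k
    obtain ⟨hZ, hZc⟩ := integrable_indicator_truncationSet_add_mul hm hG hY hD hDc k
    have hle : -A.indicator (G + Y * D) ≤ A.indicator (G + Y * D)⁻ := fun ω => by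
      by_cases hω : ω ∈ A
      · simpa [hω] using neg_le_negPart ((G + Y * D) ω)
      · simp [hω]
    filter_upwards [hZc, condExp_neg (μ := P) (A.indicator (G + Y * D)) m,
      condExp_mono hZ.neg (hF.indicator (hm _ (measurableSet_truncationSet hG hY k)))
        (ae_of_all _ hle),
      condExp_indicator hF (measurableSet_truncationSet hG hY k)] with ω hc hneg hmono hind hω
    rwa [hneg, Pi.neg_apply, hc, hind, Set.indicator_of_mem hω, Set.indicator_of_mem hω] at hmono
  filter_upwards [ae_all_iff.mpr hbound, hA.ae_eventually_mem, condExp_nonneg (m := m)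
    (ae_of_all P fun ω => negPart_nonneg ((G + Y * D) ω))] with ω hω hmem hnn
  obtain ⟨k, hk⟩ := hmem.exists
  exact max_le (hω k hk) hnn

lemma integrable_negPart_of_add_mul [IsFiniteMeasure P] (hm : m ≤ mΩ)
    (hG : StronglyMeasurable[m] G) (hY : StronglyMeasurable[m] Y) (hD : Integrable D P)
    (hDc : P[D|m] =ᵐ[P] 0) (hF : Integrable (G + Y * D)⁻ P) :
    Integrable G⁻ P ∧ ∫ ω, G⁻ ω ∂P ≤ ∫ ω, (G + Y * D)⁻ ω ∂P := by
  have hle := negPart_le_condExp_negPart_add_mul hm hG hY hD hDc hF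
  have hcond : Integrable (P[(G + Y * D)⁻|m]) P := integrable_condExp
  have hint : Integrable G⁻ P := hcond.mono' (hG.mono hm).aestronglyMeasurable.negPart <| by
    filter_upwards [hle] with ω hω
    rwa [Real.norm_of_nonneg (negPart_nonneg G ω)]
  refine ⟨hint, ?_⟩
  calc ∫ ω, G⁻ ω ∂P ≤ ∫ ω, P[(G + Y * D)⁻|m] ω ∂P := integral_mono_ae hint hcond hle
    _ = ∫ ω, (G + Y * D)⁻ ω ∂P := integral_condExp hm

lemma integrable_add_mul_of_integrable_negPart [IsFiniteMeasure P] (hm : m ≤ mΩ)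
    (hG : StronglyMeasurable[m] G) (hGi : Integrable G P) (hY : StronglyMeasurable[m] Y)
    (hD : Integrable D P) (hDc : P[D|m] =ᵐ[P] 0) (hF : Integrable (G + Y * D)⁻ P) :
    Integrable (G + Y * D) P ∧ ∫ ω, (G + Y * D) ω ∂P = ∫ ω, G ω ∂P := by
  have hA := aecover_truncationSet (P := P) hm hG hY
  have hset : ∀ k, IntegrableOn (G + Y * D) (truncationSet G Y k) P ∧
      ∫ ω in truncationSet G Y k, (G + Y * D) ω ∂P = ∫ ω in truncationSet G Y k, G ω ∂P := by
    intro k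
    have hAk := hA.measurableSet k
    obtain ⟨hZ, hZc⟩ := integrable_indicator_truncationSet_add_mul hm hG hY hD hDc k
    refine ⟨(integrable_indicator_iff hAk).mp hZ, ?_⟩
    rw [← integral_indicator hAk, ← integral_indicator hAk, ← integral_condExp hm,
      integral_congr_ae hZc]
  have hint : Integrable (G + Y * D) P := by
    refine hA.integrable_of_integral_norm_bounded (2 * ∫ ω, (G + Y * D)⁻ ω ∂P + ∫ ω, |G ω| ∂P)
      (fun k => (hset k).1) (Eventually.of_forall fun k => ?_)
    simp only [Real.norm_eq_abs]
    rw [integral_abs_eq_two_mul_integral_negPart_add_integral (hset k).1, (hset k).2]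
    gcongr
    · exact setIntegral_le_integral hF (ae_of_all _ fun ω => negPart_nonneg _)
    · exact (setIntegral_mono_on hGi.integrableOn hGi.abs.integrableOn (hA.measurableSet k)
        fun ω _ => le_abs_self (G ω)).trans
        (setIntegral_le_integral hGi.abs (ae_of_all _ fun ω => abs_nonneg _))
  exact ⟨hint, hA.integral_eq_of_tendsto _ hint
    ((hA.integral_tendsto_of_countably_generated hGi).congr fun k => ((hset k).2).symm)⟩

end Truncation

lemma integrable_negPart_of_ae_le {Ω : Type*} {mΩ : MeasurableSpace Ω} {P : Measure Ω}
    {f g : Ω → ℝ} (hf : AEStronglyMeasurable f P) (hg : Integrable g P) (hgf : g ≤ᵐ[P] f) :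
    Integrable f⁻ P ∧ ∫ ω, f⁻ ω ∂P ≤ ∫ ω, |g ω| ∂P := by
  have hle : f⁻ ≤ᵐ[P] fun ω => |g ω| := by
    filter_upwards [hgf] with ω hω
    exact (negPart_anti hω).trans (sup_le (neg_le_abs _) (abs_nonneg _))
  have hint : Integrable f⁻ P := hg.abs.mono' hf.negPart <| by
    filter_upwards [hle] with ω hω
    rwa [Real.norm_of_nonneg (negPart_nonneg f ω)]
  exact ⟨hint, integral_mono_ae hint hg.abs hle⟩

section MartingaleTransform

variable {Ω : Type*} {mΩ : MeasurableSpace Ω} {ℱ : Filtration ℕ mΩ} {P : Measure Ω}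
  {S H : ℕ → Ω → ℝ}

def martingaleTransform (H S : ℕ → Ω → ℝ) (s : ℕ) (ω : Ω) : ℝ :=
  ∑ u ∈ Icc 1 s, H u ω * (S u ω - S (u - 1) ω)

lemma martingaleTransform_zero : martingaleTransform H S 0 = 0 := by
  ext ω
  simp [martingaleTransform]

lemma martingaleTransform_succ (s : ℕ) :
    martingaleTransform H S (s + 1)
      = martingaleTransform H S s + H (s + 1) * (S (s + 1) - S s) := by
  ext ω
  simp [martingaleTransform, Finset.sum_Icc_succ_top (Nat.le_add_left 1 s)]

lemma stronglyMeasurable_martingaleTransform (hS : StronglyAdapted ℱ S)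
    (hH : ∀ s, StronglyMeasurable[ℱ s] (H (s + 1))) (s : ℕ) :
    StronglyMeasurable[ℱ s] (martingaleTransform H S s) := by
  induction s with
  | zero => simpa [martingaleTransform_zero] using stronglyMeasurable_zero
  | succ s ih =>
    rw [martingaleTransform_succ]
    exact (ih.mono (ℱ.mono s.le_succ)).add
      ((hH s).mono (ℱ.mono s.le_succ) |>.mul ((hS (s + 1)).sub ((hS s).mono (ℱ.mono s.le_succ))))

lemma MeasureTheory.Martingale.condExp_sub_ae_eq_zero_s3 [IsFiniteMeasure P]
    (hS : Martingale S ℱ P) (s : ℕ) :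
    P[S (s + 1) - S s|ℱ s] =ᵐ[P] 0 := by
  filter_upwards [condExp_sub (hS.integrable (s + 1)) (hS.integrable s) (ℱ s),
    hS.condExp_ae_eq s.le_succ] with ω hsub hnext
  rw [hsub, Pi.sub_apply, hnext,
    condExp_of_stronglyMeasurable (ℱ.le s) (hS.stronglyAdapted s) (hS.integrable s), sub_self]
  rfl

lemma integrable_negPart_martingaleTransform [IsFiniteMeasure P] (hS : Martingale S ℱ P)
    (hH : ∀ s, StronglyMeasurable[ℱ s] (H (s + 1))) {T : ℕ}
    (hT : Integrable (martingaleTransform H S T)⁻ P) {s : ℕ} (hs : s ≤ T) :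
    Integrable (martingaleTransform H S s)⁻ P ∧
      ∫ ω, (martingaleTransform H S s)⁻ ω ∂P ≤ ∫ ω, (martingaleTransform H S T)⁻ ω ∂P := by
  induction hs using Nat.decreasingInduction with
  | self => exact ⟨hT, le_rfl⟩
  | of_succ k _ ih =>
    rw [martingaleTransform_succ] at ih
    have hstep := integrable_negPart_of_add_mul (ℱ.le k)
      (stronglyMeasurable_martingaleTransform hS.stronglyAdapted hH k) (hH k)
      ((hS.integrable (k + 1)).sub (hS.integrable k)) (hS.condExp_sub_ae_eq_zero_s3 k) ih.1
    exact ⟨hstep.1, hstep.2.trans ih.2⟩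

lemma integrable_martingaleTransform [IsFiniteMeasure P] (hS : Martingale S ℱ P)
    (hH : ∀ s, StronglyMeasurable[ℱ s] (H (s + 1))) {T : ℕ}
    (hT : Integrable (martingaleTransform H S T)⁻ P) {s : ℕ} (hs : s ≤ T) :
    Integrable (martingaleTransform H S s) P ∧ ∫ ω, martingaleTransform H S s ω ∂P = 0 := by
  induction s with
  | zero => simp [martingaleTransform_zero]
  | succ s ih =>
    obtain ⟨hint, hmean⟩ := ih (by omega)
    have hneg := (integrable_negPart_martingaleTransform hS hH hT hs).1
    rw [martingaleTransform_succ] at hneg ⊢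
    have hstep := integrable_add_mul_of_integrable_negPart (ℱ.le s)
      (stronglyMeasurable_martingaleTransform hS.stronglyAdapted hH s) hint (hH s)
      ((hS.integrable (s + 1)).sub (hS.integrable s)) (hS.condExp_sub_ae_eq_zero_s3 s) hneg
    exact ⟨hstep.1, hstep.2.trans hmean⟩

lemma integral_abs_martingaleTransform_le [IsFiniteMeasure P] (hS : Martingale S ℱ P)
    (hH : ∀ s, StronglyMeasurable[ℱ s] (H (s + 1))) {T : ℕ}
    (hT : Integrable (martingaleTransform H S T)⁻ P) {s : ℕ} (hs : s ≤ T) :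
    ∫ ω, |martingaleTransform H S s ω| ∂P ≤ 2 * ∫ ω, (martingaleTransform H S T)⁻ ω ∂P := by
  obtain ⟨hint, hmean⟩ := integrable_martingaleTransform hS hH hT hs
  rw [integral_abs_eq_two_mul_integral_negPart_add_integral hint, hmean, add_zero]
  exact mul_le_mul_of_nonneg_left (integrable_negPart_martingaleTransform hS hH hT hs).2
    two_pos.le

lemma integral_abs_martingaleTransform_increment_le [IsFiniteMeasure P] (hS : Martingale S ℱ P)
    (hH : ∀ s, StronglyMeasurable[ℱ s] (H (s + 1))) {T : ℕ}
    (hT : Integrable (martingaleTransform H S T)⁻ P) {s : ℕ} (hs : s + 1 ≤ T) :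
    ∫ ω, |H (s + 1) ω * (S (s + 1) ω - S s ω)| ∂P
      ≤ 4 * ∫ ω, (martingaleTransform H S T)⁻ ω ∂P := by
  set M := martingaleTransform H S
  have hs' : s ≤ T := by omega
  have hM₁ := (integrable_martingaleTransform hS hH hT hs).1
  have hM₀ := (integrable_martingaleTransform hS hH hT hs').1
  have hincr : ∀ ω, H (s + 1) ω * (S (s + 1) ω - S s ω) = M (s + 1) ω - M s ω := fun ω => by
    simp [M, martingaleTransform_succ]
  calc ∫ ω, |H (s + 1) ω * (S (s + 1) ω - S s ω)| ∂P
      ≤ ∫ ω, (|M (s + 1) ω| + |M s ω|) ∂P := by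
        simp_rw [hincr]
        exact integral_mono (hM₁.sub hM₀).abs (hM₁.abs.add hM₀.abs) fun ω => abs_sub _ _
    _ = ∫ ω, |M (s + 1) ω| ∂P + ∫ ω, |M s ω| ∂P := integral_add hM₁.abs hM₀.abs
    _ ≤ 4 * ∫ ω, (M T)⁻ ω ∂P := by
        linarith [integral_abs_martingaleTransform_le hS hH hT hs,
          integral_abs_martingaleTransform_le hS hH hT hs']

end MartingaleTransform

theorem stmt3_general {Ω : Type*} {mΩ : MeasurableSpace Ω} (ℱ : Filtration ℕ mΩ) (T : ℕ)
    (𝔓 : Set (Measure Ω))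
    (S : ℕ → Ω → ℝ)
    (hmart : ∀ P ∈ 𝔓, IsProbabilityMeasure P ∧ Martingale S ℱ P)
    (H : ℕ → ℕ → Ω → ℝ) (K W : ℕ → Ω → ℝ)
    (hH : ∀ n, ∀ t : ℕ, 1 ≤ t → StronglyMeasurable[ℱ (t - 1)] (H n t))
    (hK : ∀ n, ∀ P ∈ 𝔓, ∀ᵐ ω ∂P, 0 ≤ K n ω)
    (hW : ∀ n ω, W n ω = (∑ u ∈ Finset.Icc 1 T, H n u ω * (S u ω - S (u - 1) ω)) - K n ω)
    (hWint : ∀ n, ∀ P ∈ 𝔓, Integrable (W n) P)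
    (hWbdd : ∀ P ∈ 𝔓, ∃ C : ℝ, ∀ n, ∫ ω, |W n ω| ∂P ≤ C) :
    ∀ P ∈ 𝔓, ∀ t : ℕ, 1 ≤ t → t ≤ T →
      ∃ C : ℝ, ∀ n, ∫ ω, |H n t ω * (S t ω - S (t - 1) ω)| ∂P ≤ C := by
  intro P hP t ht1 htT
  obtain ⟨_, hS⟩ := hmart P hP
  obtain ⟨C, hC⟩ := hWbdd P hP
  obtain ⟨s, rfl⟩ := Nat.exists_eq_add_of_le' ht1
  refine ⟨4 * C, fun n => ?_⟩
  have hpred : ∀ s, StronglyMeasurable[ℱ s] (H n (s + 1)) := fun s => by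
    simpa using hH n (s + 1) (by omega)
  have hWM : W n ≤ᵐ[P] martingaleTransform (H n) S T := by
    filter_upwards [hK n P hP] with ω hKω
    rw [hW, martingaleTransform]
    linarith
  obtain ⟨hTint, hTle⟩ := integrable_negPart_of_ae_le
    ((stronglyMeasurable_martingaleTransform hS.stronglyAdapted hpred T).mono
      (ℱ.le T)).aestronglyMeasurable (hWint n P hP) hWM
  calc ∫ ω, |H n (s + 1) ω * (S (s + 1) ω - S (s + 1 - 1) ω)| ∂P
      ≤ 4 * ∫ ω, (martingaleTransform (H n) S T)⁻ ω ∂P := by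
        simpa using integral_abs_martingaleTransform_increment_le hS hpred hTint htT
    _ ≤ 4 * C := by linarith [hC n]

/-- If `W^n = (H^n·S)_T − K^n` with `H^n` predictable and `K^n ≥ 0` 𝔓-q.s., each `W^n`
integrable with `sup_n E_P[|W^n|] < ∞` for every martingale measure `P ∈ 𝔓`, then for
every `P ∈ 𝔓` and `t ∈ {1,…,T}` the sequence `{H^n_t ΔS_t}` is bounded in `L¹(P)`. -/
theorem stmt3 {Ω : Type*} {mΩ : MeasurableSpace Ω} (ℱ : Filtration ℕ mΩ) (T : ℕ)
    (𝔓 : Set (Measure Ω)) (h𝔓 : 𝔓.Nonempty)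
    (S : ℕ → Ω → ℝ)
    (hmart : ∀ P ∈ 𝔓, IsProbabilityMeasure P ∧ Martingale S ℱ P)
    (H : ℕ → ℕ → Ω → ℝ) (K W : ℕ → Ω → ℝ)
    (hH : ∀ n, ∀ t : ℕ, 1 ≤ t → StronglyMeasurable[ℱ (t - 1)] (H n t))
    (hK : ∀ n, ∀ P ∈ 𝔓, ∀ᵐ ω ∂P, 0 ≤ K n ω)
    (hW : ∀ n ω, W n ω = (∑ u ∈ Finset.Icc 1 T, H n u ω * (S u ω - S (u - 1) ω)) - K n ω)
    (hWint : ∀ n, ∀ P ∈ 𝔓, Integrable (W n) P)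
    (hWbdd : ∀ P ∈ 𝔓, ∃ C : ℝ, ∀ n, ∫ ω, |W n ω| ∂P ≤ C) :
    ∀ P ∈ 𝔓, ∀ t : ℕ, 1 ≤ t → t ≤ T →
      ∃ C : ℝ, ∀ n, ∫ ω, |H n t ω * (S t ω - S (t - 1) ω)| ∂P ≤ C :=
  stmt3_general ℱ T 𝔓 S hmart H K W hH hK hW hWint hWbdd
end

section
/- On Ω = [0,1] with 𝒫 the set of countably supported probability measures, a sequence of Borel functions f_n: [0,1] → ℝ satisfies E_P[|f_n|] → 0 for every P ∈ 𝒫 if and only if the sequence is uniformly bounded (sup over n and x of |f_n(x)| < ∞) and converges to 0 pointwise on [0,1]. -/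
open MeasureTheory Filter ENNReal Topology

/-! A Dirac mass at `x` turns `E_P[|f_n|] → 0` into `f_n x → 0`. If the `f_n` were not uniformly
bounded, pick `|f (n k) (x k)| > 2^(k+1) k`; against `P = ∑ 2^-(k+1) δ_(x k)` the integrals of
`|f (n k)|` are then at least `k`, so they are unbounded. Conversely, a uniform bound and
pointwise convergence give `E_P[|f_n|] → 0` by dominated convergence. -/

def countablySupportedProbabilityMeasures (α : Type*) [MeasurableSpace α] : Set (Measure α) :=
  {P | IsProbabilityMeasure P ∧ ∃ D : Set α, D.Countable ∧ P Dᶜ = 0}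

section CountablySupported

variable {α : Type*} [MeasurableSpace α]

noncomputable def dyadicDiracSum (x : ℕ → α) : Measure α :=
  Measure.sum fun k => (2⁻¹ : ℝ≥0∞) ^ (k + 1) • Measure.dirac (x k)

variable [MeasurableSingletonClass α]

theorem dirac_mem_countablySupportedProbabilityMeasures (x : α) :
    Measure.dirac x ∈ countablySupportedProbabilityMeasures α :=
  ⟨inferInstance, {x}, Set.countable_singleton x, by simp⟩

theorem dyadicDiracSum_mem_countablySupportedProbabilityMeasures (x : ℕ → α) :
    dyadicDiracSum x ∈ countablySupportedProbabilityMeasures α := by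
  have hrange : MeasurableSet (Set.range x)ᶜ := (Set.countable_range x).measurableSet.compl
  refine ⟨⟨?_⟩, Set.range x, Set.countable_range x, ?_⟩
  · simp only [dyadicDiracSum, Measure.sum_apply _ MeasurableSet.univ, Measure.smul_apply,
      measure_univ, smul_eq_mul, mul_one, pow_succ, ENNReal.tsum_mul_right,
      ENNReal.tsum_geometric, ENNReal.one_sub_inv_two, inv_inv]
    exact ENNReal.mul_inv_cancel two_ne_zero ofNat_ne_top
  · simp [dyadicDiracSum, Measure.sum_apply _ hrange, Measure.dirac_apply' _ hrange]

theorem mul_le_integral_dyadicDiracSum {x : ℕ → α} {g : α → ℝ} (hg : 0 ≤ g)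
    (hint : Integrable g (dyadicDiracSum x)) (k : ℕ) :
    (2⁻¹ : ℝ) ^ (k + 1) * g (x k) ≤ ∫ y, g y ∂dyadicDiracSum x := by
  have hterm : ∫ y, g y ∂((2⁻¹ : ℝ≥0∞) ^ (k + 1) • Measure.dirac (x k)) =
      (2⁻¹ : ℝ) ^ (k + 1) * g (x k) := by
    simp [integral_smul_measure, integral_dirac, ENNReal.toReal_pow]
  rw [← hterm]
  exact integral_mono_measure (Measure.le_sum _ k) (ae_of_all _ hg) hint

theorem exists_abs_le_of_bddAbove_integral_dyadicDiracSum {f : ℕ → α → ℝ}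
    (hint : ∀ n x, Integrable (f n) (dyadicDiracSum x))
    (hbdd : ∀ x, BddAbove (Set.range fun n => ∫ y, |f n y| ∂dyadicDiracSum x)) :
    ∃ M, ∀ n y, |f n y| ≤ M := by
  by_contra! hB
  choose n x hx using fun k : ℕ => hB (2 ^ (k + 1) * k)
  obtain ⟨C, hC⟩ := hbdd x
  have hgrow (k : ℕ) : (k : ℝ) ≤ C := calc
    (k : ℝ) = (2⁻¹ : ℝ) ^ (k + 1) * (2 ^ (k + 1) * k) := by
      rw [← mul_assoc, ← mul_pow, inv_mul_cancel₀ two_ne_zero, one_pow, one_mul]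
    _ ≤ (2⁻¹ : ℝ) ^ (k + 1) * |f (n k) (x k)| := by gcongr; exact (hx k).le
    _ ≤ ∫ y, |f (n k) y| ∂dyadicDiracSum x :=
      mul_le_integral_dyadicDiracSum (fun _ => abs_nonneg _) (hint (n k) x).abs k
    _ ≤ C := hC ⟨n k, rfl⟩
  obtain ⟨k, hk⟩ := exists_nat_gt C
  exact (hgrow k).not_gt hk

end CountablySupported

theorem tendsto_integral_abs_of_abs_le_of_tendsto_zero {α : Type*} [MeasurableSpace α]
    {μ : Measure α} [IsFiniteMeasure μ] {f : ℕ → α → ℝ} {M : ℝ}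
    (hf : ∀ n, AEStronglyMeasurable (f n) μ) (hM : ∀ n x, |f n x| ≤ M)
    (hlim : ∀ x, Tendsto (fun n => f n x) atTop (𝓝 0)) :
    Tendsto (fun n => ∫ x, |f n x| ∂μ) atTop (𝓝 0) := by
  have := tendsto_integral_of_dominated_convergence (μ := μ) (F := fun n x => |f n x|)
    (fun _ => M) (fun n => (hf n).norm) (integrable_const M)
    (fun n => ae_of_all _ fun x => by simpa using hM n x)
    (ae_of_all _ fun x => by simpa using (hlim x).abs)
  simpa using this

theorem stmt7_general
    (𝔓 : Set (Measure (Set.Icc (0:ℝ) 1)))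
    (h𝔓 : 𝔓 = {P | IsProbabilityMeasure P ∧
      ∃ D : Set (Set.Icc (0:ℝ) 1), D.Countable ∧ P Dᶜ = 0})
    (f : ℕ → (Set.Icc (0:ℝ) 1) → ℝ)
    (hint : ∀ n, ∀ P ∈ 𝔓, Integrable (f n) P) :
    (∀ P ∈ 𝔓, Tendsto (fun n => ∫ x, |f n x| ∂P) atTop (nhds 0)) ↔
      ((∃ M : ℝ, ∀ n x, |f n x| ≤ M) ∧
        ∀ x, Tendsto (fun n => f n x) atTop (nhds 0)) := by
  obtain rfl : 𝔓 = countablySupportedProbabilityMeasures _ := h𝔓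
  constructor
  · intro h
    refine ⟨exists_abs_le_of_bddAbove_integral_dyadicDiracSum
      (fun n x => hint n _ (dyadicDiracSum_mem_countablySupportedProbabilityMeasures x))
      (fun x => (h _ (dyadicDiracSum_mem_countablySupportedProbabilityMeasures x)).bddAbove_range),
      fun x => ?_⟩
    refine (tendsto_zero_iff_abs_tendsto_zero _).2 ?_
    simpa only [integral_dirac, Function.comp_def] using
      h _ (dirac_mem_countablySupportedProbabilityMeasures x)
  · rintro ⟨⟨M, hM⟩, hlim⟩ P hP
    have : IsProbabilityMeasure P := hP.1
    exact tendsto_integral_abs_of_abs_le_of_tendsto_zero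
      (fun n => (hint n P hP).aestronglyMeasurable) hM hlim

/-- On `[0,1]` with `𝔓` the countably supported probability measures, a sequence of
Borel functions satisfies `E_P[|f_n|] → 0` for every `P ∈ 𝔓` iff it is uniformly
bounded and converges to `0` pointwise. -/
theorem stmt7
    (𝔓 : Set (Measure (Set.Icc (0:ℝ) 1)))
    (h𝔓 : 𝔓 = {P | IsProbabilityMeasure P ∧
      ∃ D : Set (Set.Icc (0:ℝ) 1), D.Countable ∧ P Dᶜ = 0})
    (f : ℕ → (Set.Icc (0:ℝ) 1) → ℝ) (hmeas : ∀ n, Measurable (f n))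
    (hint : ∀ n, ∀ P ∈ 𝔓, Integrable (f n) P) :
    (∀ P ∈ 𝔓, Tendsto (fun n => ∫ x, |f n x| ∂P) atTop (nhds 0)) ↔
      ((∃ M : ℝ, ∀ n x, |f n x| ≤ M) ∧
        ∀ x, Tendsto (fun n => f n x) atTop (nhds 0)) :=
  stmt7_general 𝔓 h𝔓 f hint
end

section
/- Let 𝒫 be a nonempty family of probability measures and f ∈ 𝕃¹ be 𝒫-uniformly integrable. Then the truncations f ∧ n ∨ (−n) converge to f in the norm ‖g‖₁ = sup_{P∈𝒫} E_P[|g|]; consequently f lies in the ‖·‖₁-closure of the bounded measurable functions. -/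
open MeasureTheory Filter

lemma trunc_abs_eq (x n : ℝ) (hn : 0 ≤ n) :
    |x - max (min x n) (-n)| = max (|x| - n) 0 := by
  rcases le_total x n with h1 | h1
  · rcases le_total (-n) x with h2 | h2
    · rw [min_eq_left h1, max_eq_left h2]
      have : |x| ≤ n := abs_le.2 ⟨h2, h1⟩
      simp [max_eq_right (by linarith : |x| - n ≤ 0)]
    · rw [min_eq_left h1, max_eq_right h2]
      have hx : x ≤ 0 := by linarith
      rw [abs_of_nonpos hx, abs_of_nonpos (by linarith : x - -n ≤ 0),
        max_eq_left (by linarith : (0:ℝ) ≤ -x - n)]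
      ring
  · rw [min_eq_right h1, max_eq_left (by linarith : -n ≤ n)]
    have hx : 0 ≤ x := by linarith
    rw [abs_of_nonneg hx, abs_of_nonneg (by linarith : (0:ℝ) ≤ x - n),
      max_eq_left (by linarith : (0:ℝ) ≤ x - n)]

/-- If `f ∈ 𝕃¹` is 𝔓-uniformly integrable, its truncations at level `n` converge to `f`
in the norm `‖g‖₁ = sup_{P∈𝔓} E_P[|g|]`; consequently `f` lies in the `‖·‖₁`-closure of
the bounded measurable functions. -/
theorem stmt11 {Ω : Type*} {mΩ : MeasurableSpace Ω}
    (𝔓 : Set (Measure Ω)) (h𝔓 : 𝔓.Nonempty)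
    (hprob : ∀ P ∈ 𝔓, IsProbabilityMeasure P)
    (f : Ω → ℝ) (hf : Measurable f)
    (hL1 : ∃ C : ℝ, ∀ P ∈ 𝔓, ∫ ω, |f ω| ∂P ≤ C)
    (hui : ∀ ε > (0:ℝ), ∃ N : ℕ, ∀ n ≥ N, ∀ P ∈ 𝔓,
      ∫ ω in {ω | (n:ℝ) ≤ |f ω|}, |f ω| ∂P ≤ ε) :
    (∀ ε > (0:ℝ), ∃ N : ℕ, ∀ n ≥ N, ∀ P ∈ 𝔓,
      ∫ ω, |f ω - max (min (f ω) (n:ℝ)) (-(n:ℝ))| ∂P ≤ ε) ∧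
    (∀ ε > (0:ℝ), ∃ g : Ω → ℝ, Measurable g ∧ (∃ M : ℝ, ∀ ω, |g ω| ≤ M) ∧
      ∀ P ∈ 𝔓, ∫ ω, |f ω - g ω| ∂P ≤ ε) := by
  have h1 : ∀ ε > (0:ℝ), ∃ N : ℕ, ∀ n ≥ N, ∀ P ∈ 𝔓,
      ∫ ω, |f ω - max (min (f ω) (n:ℝ)) (-(n:ℝ))| ∂P ≤ ε := by
    intro ε hε
    obtain ⟨N, hN⟩ := hui ε hε
    refine ⟨N, fun n hn P hP => ?_⟩
    haveI := hprob P hP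
    set t : Ω → ℝ := fun ω => max (min (f ω) (n:ℝ)) (-(n:ℝ)) with ht
    have heq : ∀ ω, |f ω - t ω| = max (|f ω| - n) 0 := fun ω =>
      trunc_abs_eq (f ω) n (Nat.cast_nonneg n)
    by_cases hint : Integrable (fun ω => |f ω - t ω|) P
    · have hmeas_s : MeasurableSet {ω | (n:ℝ) ≤ |f ω|} :=
        measurableSet_le measurable_const hf.abs
      -- pointwise bound (a): |f - t| ≤ indicator
      have ha : ∀ ω, |f ω - t ω| ≤
          ({ω | (n:ℝ) ≤ |f ω|}).indicator (fun ω => |f ω|) ω := by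
        intro ω
        rw [heq ω]
        by_cases hω : ω ∈ {ω | (n:ℝ) ≤ |f ω|}
        · rw [Set.indicator_of_mem hω]
          have h' : (n:ℝ) ≤ |f ω| := hω
          exact max_le (by linarith) (abs_nonneg _)
        · rw [Set.indicator_of_notMem hω]
          have h' : ¬ (n:ℝ) ≤ |f ω| := hω
          push_neg at h'
          exact le_of_eq (max_eq_right (by linarith))
      -- pointwise bound (b): indicator ≤ |f - t| + n
      have hb : ∀ ω, ({ω | (n:ℝ) ≤ |f ω|}).indicator (fun ω => |f ω|) ω ≤
          |f ω - t ω| + n := by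
        intro ω
        rw [heq ω]
        by_cases hω : ω ∈ {ω | (n:ℝ) ≤ |f ω|}
        · rw [Set.indicator_of_mem hω]
          have : |f ω| - n ≤ max (|f ω| - n) 0 := le_max_left _ _
          linarith
        · rw [Set.indicator_of_notMem hω]
          have : (0:ℝ) ≤ max (|f ω| - n) 0 := le_max_right _ _
          have hn0 : (0:ℝ) ≤ (n:ℝ) := Nat.cast_nonneg n
          linarith
      have hind_int : Integrable
          (({ω | (n:ℝ) ≤ |f ω|}).indicator (fun ω => |f ω|)) P := by
        refine (hint.add (integrable_const (n:ℝ))).mono'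
          ((hf.abs.indicator hmeas_s).aestronglyMeasurable) ?_
        filter_upwards with ω
        rw [Real.norm_eq_abs, abs_of_nonneg (Set.indicator_nonneg
          (fun ω _ => abs_nonneg (f ω)) ω)]
        exact hb ω
      calc ∫ ω, |f ω - t ω| ∂P
          ≤ ∫ ω, ({ω | (n:ℝ) ≤ |f ω|}).indicator (fun ω => |f ω|) ω ∂P :=
            integral_mono hint hind_int ha
        _ = ∫ ω in {ω | (n:ℝ) ≤ |f ω|}, |f ω| ∂P :=
            integral_indicator hmeas_s
        _ ≤ ε := hN n hn P hP
    · rw [integral_undef hint]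
      exact hε.le
  refine ⟨h1, fun ε hε => ?_⟩
  obtain ⟨N, hN⟩ := h1 ε hε
  refine ⟨fun ω => max (min (f ω) (N:ℝ)) (-(N:ℝ)),
    ((hf.min measurable_const).max measurable_const), ⟨(N:ℝ), fun ω => ?_⟩,
    fun P hP => hN N le_rfl P hP⟩
  rw [abs_le]
  constructor
  · exact le_max_right _ _
  · exact max_le (min_le_right _ _) (by simp [Nat.cast_nonneg N] : -(N:ℝ) ≤ (N:ℝ))
end

section
/- Let 𝒫 be a nonempty set of martingale measures for S, let 𝕃¹ be the Banach-normed space with ‖f‖₁ = sup_{P∈𝒫} E_P[|f|], let ℂ = ({(H·S)_T : H predictable} − 𝔏⁰₊) ∩ 𝕃¹, and let Π be the set of continuous linear functionals ℓ on 𝕃¹ with ℓ(ℂ) ⊆ ℝ₋ and ℓ(1) = 1. Assume ℂ is closed in 𝕃¹. If f ∈ 𝕃¹ has 𝒫-uniformly integrable positive part and x := sup_{ℓ∈Π} ℓ(f) is finite, then f ∈ x + ℂ; i.e., there exists a predictable H with x + (H·S)_T ≥ f 𝒫-q.s. -/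
open MeasureTheory Finset
open scoped Pointwise

/-!
Let `p = f − x`. If `p` lies within `ε` of `ℂ` for every `ε > 0`, closedness gives `p ∈ ℂ`,
which is the claim. Otherwise Hahn–Banach, applied to the gauge of `ℂ + (ε-ball)`, gives a
linear `μ` bounded by `‖·‖₁ / ε` with `μ ≤ 0` on `ℂ` and `μ p = 1`. As `−1 ∈ ℂ`, `μ 1 ≥ 0`.
If `μ 1 > 0` then `μ / μ 1 ∈ Π`; if `μ 1 = 0` then `ℓ₀ + t μ ∈ Π` for every `ℓ₀ ∈ Π` (and `Π`
is nonempty because `x` is finite) and every `t ≥ 0`. Either way `μ f ≤ x μ 1`, that is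
`μ p ≤ 0`, a contradiction.
-/

section Separation

variable {E : Type*} [AddCommGroup E] [Module ℝ E]

theorem exists_linearMap_eq_one_le_gauge {s : Set E} (hs₀ : (0 : E) ∈ s) (hs₁ : Convex ℝ s)
    (hs₂ : Absorbent ℝ s) {x₀ : E} (hx₀ : x₀ ∉ s) :
    ∃ φ : E →ₗ[ℝ] ℝ, φ x₀ = 1 ∧ ∀ x, φ x ≤ gauge s x := by
  let f : E →ₗ.[ℝ] ℝ := LinearPMap.mkSpanSingleton x₀ 1 (ne_of_mem_of_not_mem hs₀ hx₀).symm
  obtain ⟨φ, hφf, hφs⟩ := exists_extension_of_le_sublinear f (gauge s)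
    (fun c hc => gauge_smul_of_nonneg hc.le) (gauge_add_le hs₁ hs₂) <| by
      rintro ⟨x, hx⟩
      obtain ⟨y, rfl⟩ := Submodule.mem_span_singleton.1 hx
      rw [LinearPMap.mkSpanSingleton'_apply, smul_eq_mul, mul_one]
      rcases le_or_gt y 0 with hy | hy
      · exact hy.trans (gauge_nonneg _)
      · rw [gauge_smul_of_nonneg hy.le, smul_eq_mul, RingHom.id_apply,
          le_mul_iff_one_le_right hy]
        exact one_le_gauge_of_notMem (hs₁.starConvex hs₀) (hs₂ x₀) hx₀
  exact ⟨φ, (hφf ⟨x₀, Submodule.mem_span_singleton_self x₀⟩).trans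
    (LinearPMap.mkSpanSingleton_apply ℝ ℝ _ _), hφs⟩

theorem LinearMap.apply_nonpos_of_le_gauge {s : Set E} {φ : E →ₗ[ℝ] ℝ}
    (hφ : ∀ x, φ x ≤ gauge s x) {w : E} (hw : ∀ t : ℝ, 0 < t → t • w ∈ s) : φ w ≤ 0 := by
  by_contra! hpos
  have h := (hφ _).trans (gauge_le_one_of_mem (hw (2 / φ w) (by positivity)))
  rw [map_smul, smul_eq_mul, div_mul_cancel₀ _ hpos.ne'] at h
  norm_num at h

end Separation

section PolarFunctional

variable {E : Type*} [Add E] [SMul ℝ E]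

def IsPolarFunctional (M : E → Prop) (N : E → ℝ) (C : Set E) (ℓ : E → ℝ) : Prop :=
  (∀ f g, M f → M g → ℓ (f + g) = ℓ f + ℓ g) ∧ (∀ (c : ℝ) f, M f → ℓ (c • f) = c * ℓ f) ∧
    (∃ c : ℝ, ∀ f, M f → |ℓ f| ≤ c * N f) ∧ ∀ w ∈ C, ℓ w ≤ 0

variable {M : E → Prop} {N : E → ℝ} {C : Set E} {ℓ μ : E → ℝ}

theorem IsPolarFunctional.add (hℓ : IsPolarFunctional M N C ℓ) (hμ : IsPolarFunctional M N C μ) :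
    IsPolarFunctional M N C (ℓ + μ) := by
  obtain ⟨hℓa, hℓs, ⟨a, ha⟩, hℓC⟩ := hℓ
  obtain ⟨hμa, hμs, ⟨b, hb⟩, hμC⟩ := hμ
  refine ⟨fun f g hf hg => ?_, fun c f hf => ?_, ⟨a + b, fun f hf => ?_⟩,
    fun w hw => add_nonpos (hℓC w hw) (hμC w hw)⟩
  · simp only [Pi.add_apply, hℓa f g hf hg, hμa f g hf hg]; ring
  · simp only [Pi.add_apply, hℓs c f hf, hμs c f hf]; ring
  · calc |(ℓ + μ) f| ≤ |ℓ f| + |μ f| := abs_add_le _ _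
      _ ≤ a * N f + b * N f := add_le_add (ha f hf) (hb f hf)
      _ = (a + b) * N f := by ring

theorem IsPolarFunctional.smul (hℓ : IsPolarFunctional M N C ℓ) {r : ℝ} (hr : 0 ≤ r) :
    IsPolarFunctional M N C (r • ℓ) := by
  obtain ⟨hℓa, hℓs, ⟨a, ha⟩, hℓC⟩ := hℓ
  refine ⟨fun f g hf hg => ?_, fun c f hf => ?_, ⟨r * a, fun f hf => ?_⟩,
    fun w hw => mul_nonpos_of_nonneg_of_nonpos hr (hℓC w hw)⟩
  · simp only [Pi.smul_apply, smul_eq_mul, hℓa f g hf hg]; ring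
  · simp only [Pi.smul_apply, smul_eq_mul, hℓs c f hf]; ring
  · rw [Pi.smul_apply, smul_eq_mul, abs_mul, abs_of_nonneg hr, mul_assoc]
    exact mul_le_mul_of_nonneg_left (ha f hf) hr

theorem IsPolarFunctional.apply_le_mul_of_isLUB {Λ : (E → ℝ) → Prop} {e f : E}
    (hΛ : ∀ ℓ, Λ ℓ ↔ IsPolarFunctional M N C ℓ ∧ ℓ e = 1) (he : M e)
    (heC : (-1 : ℝ) • e ∈ C) {x : ℝ} (hx : IsLUB {r | ∃ ℓ, Λ ℓ ∧ r = ℓ f} x)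
    (hμ : IsPolarFunctional M N C μ) : μ f ≤ x * μ e := by
  have hμe : 0 ≤ μ e := by
    have := hμ.2.2.2 _ heC
    rw [hμ.2.1 _ _ he] at this
    linarith
  rcases hμe.lt_or_eq with hpos | hzero
  · have hnorm : Λ ((μ e)⁻¹ • μ) :=
      (hΛ _).2 ⟨hμ.smul (inv_nonneg.2 hμe), by simp [hpos.ne']⟩
    have := hx.1 ⟨_, hnorm, rfl⟩
    rwa [Pi.smul_apply, smul_eq_mul, inv_mul_le_iff₀ hpos, mul_comm] at this
  · obtain ⟨_, ℓ₀, hℓ₀, rfl⟩ := hx.nonempty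
    have hshift : ∀ t : ℝ, 0 ≤ t → ℓ₀ f + t * μ f ≤ x := fun t ht =>
      hx.1 ⟨ℓ₀ + t • μ, (hΛ _).2 ⟨((hΛ ℓ₀).1 hℓ₀).1.add (hμ.smul ht),
        by simp [((hΛ ℓ₀).1 hℓ₀).2, ← hzero]⟩, rfl⟩
    rw [← hzero, mul_zero]
    by_contra! hμf
    have hℓ₀x : ℓ₀ f ≤ x := hx.1 ⟨ℓ₀, hℓ₀, rfl⟩
    have := hshift ((x - ℓ₀ f + 1) / μ f) (by positivity)
    rw [div_mul_cancel₀ _ hμf.ne'] at this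
    linarith

end PolarFunctional

section DominatedBall

variable {Ω : Type*} {mΩ : MeasurableSpace Ω} {𝔓 : Set (Measure Ω)} {ε : ℝ}

/-- As in `‖·‖₁`, the Bochner integral of a non-integrable `v` is `0`, so `E_P[v] ≤ ε` is only
required where `v` is `P`-integrable: this makes every measurable function of finite `‖·‖₁`,
integrable or not, lie in a multiple of the ball. -/
def dominatedBall (𝔓 : Set (Measure Ω)) (ε : ℝ) : Set (Ω → ℝ) :=
  {g | ∃ v : Ω → ℝ, Measurable v ∧ 0 ≤ v ∧ (∀ P ∈ 𝔓, Integrable v P → ∫ ω, v ω ∂P ≤ ε) ∧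
    ∀ ω, |g ω| ≤ v ω}

theorem zero_mem_dominatedBall (hε : 0 ≤ ε) : (0 : Ω → ℝ) ∈ dominatedBall 𝔓 ε :=
  ⟨0, measurable_const, le_rfl, fun _ _ _ => by simpa using hε, fun _ => by simp⟩

theorem mul_integral_le_of_integrable_smul {P : Measure Ω} {v : Ω → ℝ} {c : ℝ} (hc : 0 ≤ c)
    (hcv : Integrable (c • v) P) (hvε : Integrable v P → ∫ ω, v ω ∂P ≤ ε) :
    c * ∫ ω, v ω ∂P ≤ c * ε := by
  rcases hc.eq_or_lt with rfl | hc
  · simp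
  · exact mul_le_mul_of_nonneg_left (hvε ((integrable_smul_iff hc.ne' v).1 hcv)) hc.le

theorem convex_dominatedBall : Convex ℝ (dominatedBall 𝔓 ε) := by
  rintro g₁ ⟨v₁, hv₁, hv₁0, hv₁ε, hg₁⟩ g₂ ⟨v₂, hv₂, hv₂0, hv₂ε, hg₂⟩ a b ha hb hab
  have hav₁ : 0 ≤ a • v₁ := smul_nonneg ha hv₁0
  have hbv₂ : 0 ≤ b • v₂ := smul_nonneg hb hv₂0
  refine ⟨a • v₁ + b • v₂, (hv₁.const_smul a).add (hv₂.const_smul b), add_nonneg hav₁ hbv₂,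
    fun P hP hint => ?_, fun ω => ?_⟩
  · have h₁ : Integrable (a • v₁) P := hint.mono' (hv₁.const_smul a).aestronglyMeasurable
      (ae_of_all _ fun ω => by
        rw [Real.norm_eq_abs, abs_of_nonneg (hav₁ ω)]
        exact le_add_of_nonneg_right (hbv₂ ω))
    have h₂ : Integrable (b • v₂) P := hint.mono' (hv₂.const_smul b).aestronglyMeasurable
      (ae_of_all _ fun ω => by
        rw [Real.norm_eq_abs, abs_of_nonneg (hbv₂ ω)]
        exact le_add_of_nonneg_left (hav₁ ω))
    calc ∫ ω, (a • v₁ + b • v₂) ω ∂P = a * ∫ ω, v₁ ω ∂P + b * ∫ ω, v₂ ω ∂P := by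
          rw [integral_add' h₁ h₂]
          simp only [Pi.smul_apply, smul_eq_mul, integral_const_mul]
      _ ≤ a * ε + b * ε := add_le_add (mul_integral_le_of_integrable_smul ha h₁ (hv₁ε P hP))
          (mul_integral_le_of_integrable_smul hb h₂ (hv₂ε P hP))
      _ = ε := by rw [← add_mul, hab, one_mul]
  · calc |(a • g₁ + b • g₂) ω| ≤ a * |g₁ ω| + b * |g₂ ω| := by
          simpa [abs_of_nonneg ha, abs_of_nonneg hb, abs_mul] using
            abs_add_le (a * g₁ ω) (b * g₂ ω)
      _ ≤ a * v₁ ω + b * v₂ ω :=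
          add_le_add (mul_le_mul_of_nonneg_left (hg₁ ω) ha) (mul_le_mul_of_nonneg_left (hg₂ ω) hb)

theorem inv_smul_mem_dominatedBall {g : Ω → ℝ} (hg : Measurable g) {c a : ℝ}
    (hc : ∀ P ∈ 𝔓, ∫ ω, |g ω| ∂P ≤ c) (ha : a ≠ 0) (hca : c ≤ |a| * ε) :
    a⁻¹ • g ∈ dominatedBall 𝔓 ε := by
  refine ⟨fun ω => |(a⁻¹ • g) ω|, (hg.const_smul _).abs, fun _ => abs_nonneg _,
    fun P hP _ => ?_, fun _ => le_rfl⟩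
  have ha' : 0 < |a| := abs_pos.2 ha
  simp only [Pi.smul_apply, smul_eq_mul, abs_mul, abs_inv, integral_const_mul]
  rw [inv_mul_le_iff₀ ha']
  exact (hc P hP).trans (by linarith)

/-- Subtracting `2v` makes `p - g` lie between `v` and `3v`, so that `|p - g|` is
`P`-integrable exactly when `v` is. -/
theorem exists_integral_abs_sub_le_of_mem_add_dominatedBall {K : Set (Ω → ℝ)}
    (hK : ∀ w ∈ K, ∀ v : Ω → ℝ, Measurable v → 0 ≤ v → w - v ∈ K) (hε : 0 ≤ ε) {p : Ω → ℝ}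
    (hp : p ∈ K + dominatedBall 𝔓 ε) :
    ∃ g ∈ K, ∀ P ∈ 𝔓, ∫ ω, |(p - g) ω| ∂P ≤ 3 * ε := by
  obtain ⟨w, hw, d, ⟨v, hv, hv0, hvε, hdv⟩, rfl⟩ := hp
  set g := w - (2 : ℝ) • v
  refine ⟨g, hK w hw _ (hv.const_smul 2) (smul_nonneg zero_le_two hv0), fun P hP => ?_⟩
  have hbounds : ∀ ω, v ω ≤ (w + d - g) ω ∧ (w + d - g) ω ≤ 3 * v ω := fun ω => by
    have := abs_le.1 (hdv ω)
    simp only [g, Pi.sub_apply, Pi.add_apply, Pi.smul_apply, smul_eq_mul]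
    constructor <;> linarith
  have habs : ∀ ω, |(w + d - g) ω| = (w + d - g) ω :=
    fun ω => abs_of_nonneg ((hv0 ω).trans (hbounds ω).1)
  by_cases hint : Integrable v P
  · calc ∫ ω, |(w + d - g) ω| ∂P ≤ ∫ ω, 3 * v ω ∂P :=
          integral_mono_of_nonneg (ae_of_all _ fun _ => abs_nonneg _) (hint.const_mul 3)
            (ae_of_all _ fun ω => (habs ω).trans_le (hbounds ω).2)
      _ ≤ 3 * ε := by
          rw [integral_const_mul]
          linarith [hvε P hP hint]
  · rw [integral_undef fun h => hint (h.mono' hv.aestronglyMeasurable (ae_of_all _ fun ω => by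
      rw [Real.norm_eq_abs, abs_of_nonneg (hv0 ω), habs]; exact (hbounds ω).1))]
    positivity

end DominatedBall

section MeasurableFunctions

variable {Ω : Type*} {mΩ : MeasurableSpace Ω}

variable (Ω) in
def measurableSubmodule : Submodule ℝ (Ω → ℝ) where
  carrier := {g | Measurable g}
  add_mem' := Measurable.add
  zero_mem' := measurable_const
  smul_mem' c _ hg := hg.const_smul c

/-- The separation is carried out in the space of measurable functions, where
`K + dominatedBall 𝔓 ε` is absorbent, and then extended linearly to all functions. -/
theorem exists_linearMap_of_notMem_add_dominatedBall {𝔓 : Set (Measure Ω)} {K : Set (Ω → ℝ)}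
    (hK₀ : (0 : Ω → ℝ) ∈ K) (hKm : ∀ w ∈ K, Measurable w) (hKc : Convex ℝ K)
    (hKs : ∀ t : ℝ, 0 < t → ∀ w ∈ K, t • w ∈ K)
    (hbdd : ∀ g : Ω → ℝ, Measurable g → ∃ c, ∀ P ∈ 𝔓, ∫ ω, |g ω| ∂P ≤ c)
    {ε : ℝ} (hε : 0 < ε) {p : Ω → ℝ} (hp : Measurable p) (hpK : p ∉ K + dominatedBall 𝔓 ε) :
    ∃ μ : (Ω → ℝ) →ₗ[ℝ] ℝ, μ p = 1 ∧ (∀ w ∈ K, μ w ≤ 0) ∧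
      ∀ g c, Measurable g → 0 ≤ c → (∀ P ∈ 𝔓, ∫ ω, |g ω| ∂P ≤ c) → |μ g| ≤ ε⁻¹ * c := by
  set V := measurableSubmodule Ω
  set U : Set V := V.subtype ⁻¹' (K + dominatedBall 𝔓 ε)
  have hball : ∀ (g : V) (c a : ℝ), (∀ P ∈ 𝔓, ∫ ω, |(g : Ω → ℝ) ω| ∂P ≤ c) → a ≠ 0 →
      c ≤ |a| * ε → g ∈ a • U := fun g c a hc ha hca => by
    rw [Set.mem_smul_set_iff_inv_smul_mem₀ ha]
    exact ⟨0, hK₀, _, inv_smul_mem_dominatedBall g.2 hc ha hca, zero_add _⟩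
  have hU₀ : (0 : V) ∈ U := ⟨0, hK₀, 0, zero_mem_dominatedBall hε.le, add_zero 0⟩
  have hUc : Convex ℝ U := (hKc.add convex_dominatedBall).linear_preimage V.subtype
  have hUa : Absorbent ℝ U := fun g => by
    obtain ⟨c, hc⟩ := hbdd g g.2
    refine Absorbs.of_norm ⟨|c| / ε + 1, fun a ha => Set.singleton_subset_iff.2 ?_⟩
    have ha' : |c| / ε + 1 ≤ |a| := ha
    have hca : |c| + ε ≤ |a| * ε := by
      have := mul_le_mul_of_nonneg_right ha' hε.le
      rwa [add_mul, div_mul_cancel₀ _ hε.ne', one_mul] at this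
    refine hball g c a hc (abs_pos.1 ?_) ?_
    · linarith [abs_nonneg c, (div_nonneg (abs_nonneg c) hε.le)]
    · linarith [le_abs_self c]
  obtain ⟨φ, hφp, hφU⟩ := exists_linearMap_eq_one_le_gauge hU₀ hUc hUa (x₀ := ⟨p, hp⟩) hpK
  obtain ⟨μ, hμ⟩ := LinearMap.exists_extend φ
  have hμφ : ∀ g : V, μ g = φ g := fun g => LinearMap.congr_fun hμ g
  have hle : ∀ g c, Measurable g → 0 ≤ c → (∀ P ∈ 𝔓, ∫ ω, |g ω| ∂P ≤ c) →
      μ g ≤ ε⁻¹ * c := fun g c hg hc₀ hc => by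
    refine (hμφ ⟨g, hg⟩).trans_le <| (hφU _).trans <|
      (setOfPred_gauge_le_eq hUc hU₀ hUa (by positivity)).ge <|
        Set.mem_iInter₂.2 fun r hr => ?_
    rw [inv_mul_lt_iff₀ hε] at hr
    have hr₀ : 0 < r := pos_of_mul_pos_right (hc₀.trans_lt hr) hε.le
    exact hball _ c r hc hr₀.ne' (by rw [abs_of_pos hr₀]; linarith)
  refine ⟨μ, (hμφ ⟨p, hp⟩).trans hφp, fun w hw => ?_,
    fun g c hg hc₀ hc => abs_le.2 ⟨?_, hle g c hg hc₀ hc⟩⟩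
  · rw [hμφ ⟨w, hKm w hw⟩]
    exact LinearMap.apply_nonpos_of_le_gauge hφU fun t ht =>
      ⟨t • w, hKs t ht w hw, 0, zero_mem_dominatedBall hε.le, add_zero _⟩
  · have := hle (-g) c hg.neg hc₀ (by simpa only [Pi.neg_apply, abs_neg] using hc)
    rw [map_neg] at this
    linarith

end MeasurableFunctions

section Superreplication

variable {Ω : Type*} {mΩ : MeasurableSpace Ω} {ℱ : Filtration ℕ mΩ} {𝔓 : Set (Measure Ω)}
  {S : ℕ → Ω → ℝ} {T : ℕ}

variable (ℱ 𝔓 S T) in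
def superreplicationCone : Set (Ω → ℝ) :=
  {g | Measurable g ∧ ∃ (H : ℕ → Ω → ℝ) (K : Ω → ℝ),
    (∀ t : ℕ, 1 ≤ t → StronglyMeasurable[ℱ (t - 1)] (H t)) ∧
    Measurable K ∧ (∀ P ∈ 𝔓, ∀ᵐ ω ∂P, 0 ≤ K ω) ∧
    ∀ ω, g ω = (∑ u ∈ Finset.Icc 1 T, H u ω * (S u ω - S (u - 1) ω)) - K ω}

theorem zero_mem_superreplicationCone : (0 : Ω → ℝ) ∈ superreplicationCone ℱ 𝔓 S T :=
  ⟨measurable_const, 0, 0, fun _ _ => stronglyMeasurable_const, measurable_const,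
    fun _ _ => ae_of_all _ fun _ => le_rfl, fun _ => by simp⟩

theorem add_mem_superreplicationCone {g₁ g₂ : Ω → ℝ} (h₁ : g₁ ∈ superreplicationCone ℱ 𝔓 S T)
    (h₂ : g₂ ∈ superreplicationCone ℱ 𝔓 S T) : g₁ + g₂ ∈ superreplicationCone ℱ 𝔓 S T := by
  obtain ⟨hg₁, H₁, K₁, hH₁, hK₁, hK₁0, heq₁⟩ := h₁
  obtain ⟨hg₂, H₂, K₂, hH₂, hK₂, hK₂0, heq₂⟩ := h₂
  refine ⟨hg₁.add hg₂, H₁ + H₂, K₁ + K₂, fun t ht => (hH₁ t ht).add (hH₂ t ht), hK₁.add hK₂,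
    fun P hP => (hK₁0 P hP).mp ((hK₂0 P hP).mono fun _ h₂ h₁ => add_nonneg h₁ h₂), fun ω => ?_⟩
  simp only [Pi.add_apply, heq₁ ω, heq₂ ω, add_mul, Finset.sum_add_distrib]
  ring

theorem smul_mem_superreplicationCone {g : Ω → ℝ} (hg : g ∈ superreplicationCone ℱ 𝔓 S T)
    {c : ℝ} (hc : 0 ≤ c) : c • g ∈ superreplicationCone ℱ 𝔓 S T := by
  obtain ⟨hgm, H, K, hH, hK, hK0, heq⟩ := hg
  refine ⟨hgm.const_smul c, c • H, c • K, fun t ht => (hH t ht).const_smul c, hK.const_smul c,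
    fun P hP => (hK0 P hP).mono fun _ h => smul_nonneg hc h, fun ω => ?_⟩
  simp only [Pi.smul_apply, smul_eq_mul, heq ω, Finset.mul_sum, mul_sub, mul_assoc]

theorem sub_mem_superreplicationCone {g v : Ω → ℝ} (hg : g ∈ superreplicationCone ℱ 𝔓 S T)
    (hv : Measurable v) (hv0 : 0 ≤ v) : g - v ∈ superreplicationCone ℱ 𝔓 S T := by
  obtain ⟨hgm, H, K, hH, hK, hK0, heq⟩ := hg
  refine ⟨hgm.sub hv, H, K + v, hH, hK.add hv,
    fun P hP => (hK0 P hP).mono fun ω h => add_nonneg h (hv0 ω), fun ω => ?_⟩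
  simp only [Pi.sub_apply, Pi.add_apply, heq ω]
  ring

theorem neg_one_smul_one_mem_superreplicationCone :
    (-1 : ℝ) • (fun _ => (1 : ℝ)) ∈ superreplicationCone ℱ 𝔓 S T := by
  simpa using sub_mem_superreplicationCone zero_mem_superreplicationCone
    (measurable_const (a := (1 : ℝ))) (fun _ => zero_le_one)

theorem convex_superreplicationCone : Convex ℝ (superreplicationCone ℱ 𝔓 S T) :=
  fun _ h₁ _ h₂ _ _ ha hb _ =>
    add_mem_superreplicationCone (smul_mem_superreplicationCone h₁ ha)
      (smul_mem_superreplicationCone h₂ hb)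

end Superreplication

theorem stmt19_general {Ω : Type*} {mΩ : MeasurableSpace Ω} (ℱ : Filtration ℕ mΩ) (T : ℕ)
    (𝔓 : Set (Measure Ω)) (h𝔓 : 𝔓.Nonempty)
    (S : ℕ → Ω → ℝ)
    -- the space 𝕃¹
    (memL1 : (Ω → ℝ) → Prop)
    (hmemL1 : ∀ f, memL1 f ↔ Measurable f ∧ ∃ C : ℝ, ∀ P ∈ 𝔓, ∫ ω, |f ω| ∂P ≤ C)
    -- the norm ‖·‖₁ = sup_{P∈𝔓} E_P[|·|]
    (norm1 : (Ω → ℝ) → ℝ)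
    (hnorm1 : ∀ f, IsLUB {r : ℝ | ∃ P ∈ 𝔓, r = ∫ ω, |f ω| ∂P} (norm1 f))
    -- the cone ℂ = ({(H·S)_T : H predictable} − 𝔏⁰₊) ∩ 𝕃¹
    (Cone : Set (Ω → ℝ))
    (hCone : ∀ f, f ∈ Cone ↔ memL1 f ∧
      ∃ (H : ℕ → Ω → ℝ) (K : Ω → ℝ),
        (∀ t : ℕ, 1 ≤ t → StronglyMeasurable[ℱ (t - 1)] (H t)) ∧
        Measurable K ∧ (∀ P ∈ 𝔓, ∀ᵐ ω ∂P, 0 ≤ K ω) ∧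
        ∀ ω, f ω = (∑ u ∈ Finset.Icc 1 T, H u ω * (S u ω - S (u - 1) ω)) - K ω)
    -- ℂ is closed in 𝕃¹
    (hclosed : ∀ f, memL1 f → (∀ ε > (0:ℝ), ∃ g ∈ Cone, norm1 (f - g) ≤ ε) → f ∈ Cone)
    -- the pricing functionals Π
    (Pi : ((Ω → ℝ) → ℝ) → Prop)
    (hPi : ∀ ℓ, Pi ℓ ↔
      (∀ f g, memL1 f → memL1 g → ℓ (f + g) = ℓ f + ℓ g) ∧
      (∀ (c : ℝ) f, memL1 f → ℓ (c • f) = c * ℓ f) ∧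
      (∃ c : ℝ, ∀ f, memL1 f → |ℓ f| ≤ c * norm1 f) ∧
      (∀ w ∈ Cone, ℓ w ≤ 0) ∧ ℓ (fun _ => 1) = 1)
    -- the claim f
    (f : Ω → ℝ) (hf : memL1 f)
    -- x = sup_{ℓ ∈ Π} ℓ(f) is finite
    (x : ℝ) (hx : IsLUB {r : ℝ | ∃ ℓ, Pi ℓ ∧ r = ℓ f} x) :
    ∃ H : ℕ → Ω → ℝ,
      (∀ t : ℕ, 1 ≤ t → StronglyMeasurable[ℱ (t - 1)] (H t)) ∧
      ∀ P ∈ 𝔓, ∀ᵐ ω ∂P,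
        f ω ≤ x + ∑ u ∈ Finset.Icc 1 T, H u ω * (S u ω - S (u - 1) ω) := by
  have hbdd : ∀ g, ∀ P ∈ 𝔓, ∫ ω, |g ω| ∂P ≤ norm1 g := fun g P hP => (hnorm1 g).1 ⟨P, hP, rfl⟩
  -- `hnorm1` bounds the integrals of every function, so `memL1` is just measurability.
  have hmem : ∀ g, memL1 g ↔ Measurable g := fun g =>
    ⟨fun h => ((hmemL1 g).1 h).1, fun h => (hmemL1 g).2 ⟨h, norm1 g, hbdd g⟩⟩
  obtain rfl : Cone = superreplicationCone ℱ 𝔓 S T := Set.ext fun g => by rw [hCone, hmem]; rfl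
  have hΛ : ∀ ℓ, Pi ℓ ↔ IsPolarFunctional memL1 norm1 (superreplicationCone ℱ 𝔓 S T) ℓ ∧
      ℓ (fun _ => 1) = 1 := fun ℓ => by rw [hPi, IsPolarFunctional]; simp only [and_assoc]
  set p : Ω → ℝ := f - x • fun _ => 1
  have hp : Measurable p := ((hmem f).1 hf).sub measurable_const
  by_cases happrox : ∀ ε > 0, p ∈ superreplicationCone ℱ 𝔓 S T + dominatedBall 𝔓 ε
  · obtain ⟨-, H, K, hH, -, hK, hpHK⟩ : p ∈ superreplicationCone ℱ 𝔓 S T := by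
      refine hclosed p ((hmem p).2 hp) fun ε hε => ?_
      obtain ⟨g, hg, hpg⟩ := exists_integral_abs_sub_le_of_mem_add_dominatedBall
        (fun w hw v hv hv0 => sub_mem_superreplicationCone hw hv hv0) (by positivity)
        (happrox (ε / 3) (by positivity))
      exact ⟨g, hg, (hnorm1 _).2 fun r ⟨P, hP, hr⟩ => hr ▸ (hpg P hP).trans (by linarith)⟩
    refine ⟨H, hH, fun P hP => (hK P hP).mono fun ω hω => ?_⟩
    have := hpHK ω
    simp only [p, _root_.Pi.sub_apply, _root_.Pi.smul_apply, smul_eq_mul, mul_one] at this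
    linarith
  · push Not at happrox
    obtain ⟨ε, hε, hpε⟩ := happrox
    obtain ⟨μ, hμp, hμC, hμN⟩ := exists_linearMap_of_notMem_add_dominatedBall
      zero_mem_superreplicationCone (fun w hw => hw.1) convex_superreplicationCone
      (fun t ht w hw => smul_mem_superreplicationCone hw ht.le)
      (fun g _ => ⟨norm1 g, hbdd g⟩) hε hp hpε
    have hnorm1_nonneg : ∀ g, 0 ≤ norm1 g := fun g =>
      (integral_nonneg fun _ => abs_nonneg _).trans (hbdd g _ h𝔓.some_mem)
    have hμ : IsPolarFunctional memL1 norm1 (superreplicationCone ℱ 𝔓 S T) μ :=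
      ⟨fun g h _ _ => map_add μ g h, fun c g _ => map_smul μ c g,
        ⟨ε⁻¹, fun g hg => hμN g _ ((hmem g).1 hg) (hnorm1_nonneg g) (hbdd g)⟩, hμC⟩
    have hfx := hμ.apply_le_mul_of_isLUB hΛ ((hmem _).2 measurable_const)
      neg_one_smul_one_mem_superreplicationCone hx
    rw [map_sub, map_smul, smul_eq_mul] at hμp
    linarith

/-- Superreplication theorem: if the cone `ℂ` of claims superreplicable from zero
capital is closed in the normed space `(𝕃¹, ‖·‖₁)` with `‖f‖₁ = sup_{P∈𝔓} E_P[|f|]`,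
`f ∈ 𝕃¹` has 𝔓-uniformly integrable positive part, and
`x = sup {ℓ(f) : ℓ ∈ Π}` is finite (`Π` the continuous linear functionals with
`ℓ(ℂ) ⊆ ℝ₋` and `ℓ(1) = 1`), then `f ∈ x + ℂ`: there is a predictable `H` with
`x + (H·S)_T ≥ f` 𝔓-q.s. -/
theorem stmt19 {Ω : Type*} {mΩ : MeasurableSpace Ω} (ℱ : Filtration ℕ mΩ) (T : ℕ)
    (𝔓 : Set (Measure Ω)) (h𝔓 : 𝔓.Nonempty)
    (S : ℕ → Ω → ℝ)
    (hmart : ∀ P ∈ 𝔓, IsProbabilityMeasure P ∧ Martingale S ℱ P)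
    -- the space 𝕃¹
    (memL1 : (Ω → ℝ) → Prop)
    (hmemL1 : ∀ f, memL1 f ↔ Measurable f ∧ ∃ C : ℝ, ∀ P ∈ 𝔓, ∫ ω, |f ω| ∂P ≤ C)
    -- the norm ‖·‖₁ = sup_{P∈𝔓} E_P[|·|]
    (norm1 : (Ω → ℝ) → ℝ)
    (hnorm1 : ∀ f, IsLUB {r : ℝ | ∃ P ∈ 𝔓, r = ∫ ω, |f ω| ∂P} (norm1 f))
    -- the cone ℂ = ({(H·S)_T : H predictable} − 𝔏⁰₊) ∩ 𝕃¹
    (Cone : Set (Ω → ℝ))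
    (hCone : ∀ f, f ∈ Cone ↔ memL1 f ∧
      ∃ (H : ℕ → Ω → ℝ) (K : Ω → ℝ),
        (∀ t : ℕ, 1 ≤ t → StronglyMeasurable[ℱ (t - 1)] (H t)) ∧
        Measurable K ∧ (∀ P ∈ 𝔓, ∀ᵐ ω ∂P, 0 ≤ K ω) ∧
        ∀ ω, f ω = (∑ u ∈ Finset.Icc 1 T, H u ω * (S u ω - S (u - 1) ω)) - K ω)
    -- ℂ is closed in 𝕃¹
    (hclosed : ∀ f, memL1 f → (∀ ε > (0:ℝ), ∃ g ∈ Cone, norm1 (f - g) ≤ ε) → f ∈ Cone)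
    -- the pricing functionals Π
    (Pi : ((Ω → ℝ) → ℝ) → Prop)
    (hPi : ∀ ℓ, Pi ℓ ↔
      (∀ f g, memL1 f → memL1 g → ℓ (f + g) = ℓ f + ℓ g) ∧
      (∀ (c : ℝ) f, memL1 f → ℓ (c • f) = c * ℓ f) ∧
      (∃ c : ℝ, ∀ f, memL1 f → |ℓ f| ≤ c * norm1 f) ∧
      (∀ w ∈ Cone, ℓ w ≤ 0) ∧ ℓ (fun _ => 1) = 1)
    -- the claim f
    (f : Ω → ℝ) (hf : memL1 f)
    -- f⁺ is 𝔓-uniformly integrable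
    (hui : ∀ ε > (0:ℝ), ∃ N : ℕ, ∀ n ≥ N, ∀ P ∈ 𝔓,
      ∫ ω in {ω | (n:ℝ) ≤ max (f ω) 0}, max (f ω) 0 ∂P ≤ ε)
    -- x = sup_{ℓ ∈ Π} ℓ(f) is finite
    (x : ℝ) (hx : IsLUB {r : ℝ | ∃ ℓ, Pi ℓ ∧ r = ℓ f} x) :
    ∃ H : ℕ → Ω → ℝ,
      (∀ t : ℕ, 1 ≤ t → StronglyMeasurable[ℱ (t - 1)] (H t)) ∧
      ∀ P ∈ 𝔓, ∀ᵐ ω ∂P,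
        f ω ≤ x + ∑ u ∈ Finset.Icc 1 T, H u ω * (S u ω - S (u - 1) ω) :=
  stmt19_general ℱ T 𝔓 h𝔓 S memL1 hmemL1 norm1 hnorm1 Cone hCone hclosed Pi hPi f hf x hx
end
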